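/- arXiv:0902.0534 — 5 statements merged into one kernel-verified Lean document; each statement's English description precedes it below -/
import Mathlib

section
/- Let k be a field and G an infinite subgroup of the group of k-algebra automorphisms of the rational function field k(x). Then the fixed field of G consists only of constants: k(x)^G = k. -/
open Polynomial IntermediateField

/-- `RatFunc k` is generated over `k` by `X` as a field. -/
lemma aux_adjoin_X_top (k : Type*) [Field k] :
    IntermediateField.adjoin k {RatFunc.X} = (⊤ : IntermediateField k (RatFunc k)) := by
  rw [eq_top_iff]
  intro g _
  induction g using RatFunc.induction_on with
  | f p q hq =>
    apply div_mem
    · have : ∀ p : Polynomial k,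
          algebraMap (Polynomial k) (RatFunc k) p ∈ IntermediateField.adjoin k {RatFunc.X} := by
        intro p
        induction p using Polynomial.induction_on' with
        | add a b ha hb => rw [map_add]; exact add_mem ha hb
        | monomial n a =>
          rw [← Polynomial.C_mul_X_pow_eq_monomial, map_mul, map_pow]
          refine mul_mem ?_ (pow_mem ?_ n)
          · have : (algebraMap (Polynomial k) (RatFunc k)) (Polynomial.C a)
                = algebraMap k (RatFunc k) a := by
              rw [IsScalarTower.algebraMap_apply k (Polynomial k) (RatFunc k) a,
                Polynomial.algebraMap_eq]
            rw [this]
            exact (IntermediateField.adjoin k {RatFunc.X}).algebraMap_mem a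
          · exact IntermediateField.subset_adjoin k {RatFunc.X} rfl
      exact this p
    · -- same for q
      have : ∀ p : Polynomial k,
          algebraMap (Polynomial k) (RatFunc k) p ∈ IntermediateField.adjoin k {RatFunc.X} := by
        intro p
        induction p using Polynomial.induction_on' with
        | add a b ha hb => rw [map_add]; exact add_mem ha hb
        | monomial n a =>
          rw [← Polynomial.C_mul_X_pow_eq_monomial, map_mul, map_pow]
          refine mul_mem ?_ (pow_mem ?_ n)
          · have : (algebraMap (Polynomial k) (RatFunc k)) (Polynomial.C a)
                = algebraMap k (RatFunc k) a := by
              rw [IsScalarTower.algebraMap_apply k (Polynomial k) (RatFunc k) a,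
                Polynomial.algebraMap_eq]
            rw [this]
            exact (IntermediateField.adjoin k {RatFunc.X}).algebraMap_mem a
          · exact IntermediateField.subset_adjoin k {RatFunc.X} rfl
      exact this q

/-- `X` is integral over `k(f)` for `f` nonconstant. -/
lemma aux_X_isAlgebraic (k : Type*) [Field k] (f : RatFunc k)
    (hf : f ∉ (⊥ : IntermediateField k (RatFunc k))) :
    IsAlgebraic (IntermediateField.adjoin k {f}) (RatFunc.X : RatFunc k) := by
  set K : IntermediateField k (RatFunc k) := IntermediateField.adjoin k {f}
  have hfK : f ∈ K := IntermediateField.mem_adjoin_simple_self k f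
  set fK : K := ⟨f, hfK⟩
  set q : Polynomial K :=
    f.num.map (algebraMap k K) - Polynomial.C fK * f.denom.map (algebraMap k K) with hq
  refine ⟨q, ?_, ?_⟩
  · intro h0
    -- all coefficients vanish; look at leading coefficient of denom
    have hcoeff : ∀ i, (algebraMap k K) (f.num.coeff i)
        = fK * (algebraMap k K) (f.denom.coeff i) := by
      intro i
      have := congrArg (fun p => Polynomial.coeff p i) h0
      simpa [hq, Polynomial.coeff_map, sub_eq_zero] using this
    set i := f.denom.natDegree
    have hd : f.denom.coeff i ≠ 0 := by
      rw [Polynomial.coeff_natDegree]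
      exact Polynomial.leadingCoeff_ne_zero.mpr f.denom_ne_zero
    have hc : (algebraMap k K) (f.denom.coeff i) ≠ 0 := fun hz =>
      hd ((algebraMap k K).injective (by rw [hz, map_zero]))
    have : fK = algebraMap k K (f.num.coeff i / f.denom.coeff i) := by
      rw [map_div₀, eq_div_iff hc]
      exact (hcoeff i).symm
    apply hf
    rw [IntermediateField.mem_bot]
    refine ⟨f.num.coeff i / f.denom.coeff i, ?_⟩
    have := congrArg (Subtype.val : K → RatFunc k) this
    simpa [fK] using this.symm
  · -- aeval X q = 0
    have hmap : ∀ p : Polynomial k,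
        Polynomial.aeval RatFunc.X (p.map (algebraMap k K))
          = algebraMap (Polynomial k) (RatFunc k) p := by
      intro p
      rw [Polynomial.aeval_map_algebraMap]
      calc Polynomial.aeval (RatFunc.X) p
          = Polynomial.aeval ((IsScalarTower.toAlgHom k (Polynomial k) (RatFunc k))
              Polynomial.X) p := rfl
        _ = (IsScalarTower.toAlgHom k (Polynomial k) (RatFunc k)) (Polynomial.aeval Polynomial.X p) :=
            (Polynomial.aeval_algHom_apply
              (IsScalarTower.toAlgHom k (Polynomial k) (RatFunc k)) Polynomial.X p)
        _ = algebraMap (Polynomial k) (RatFunc k) p := by rw [Polynomial.aeval_X_left_apply]; rfl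
    have hK : (algebraMap K (RatFunc k)) fK = f := rfl
    rw [hq, map_sub, map_mul, Polynomial.aeval_C, hmap, hmap, hK]
    rw [sub_eq_zero]
    exact (div_eq_iff (RatFunc.algebraMap_ne_zero f.denom_ne_zero)).mp
      (RatFunc.num_div_denom f)

/-- Let `k` be a field and `G` an infinite subgroup of the group of `k`-algebra automorphisms
of the rational function field `k(x)`. Then the fixed field of `G` consists only of constants:
`k(x)^G = k`. -/
theorem statement4 (k : Type*) [Field k]
    (G : Subgroup (RatFunc k ≃ₐ[k] RatFunc k)) (hG : Infinite ↥G) :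
    IntermediateField.fixedField G = ⊥ := by
  by_contra h
  have hlt : (⊥ : IntermediateField k (RatFunc k)) < IntermediateField.fixedField G :=
    lt_of_le_of_ne bot_le (Ne.symm h)
  obtain ⟨f, hfF, hfb⟩ := SetLike.exists_of_lt hlt
  set K : IntermediateField k (RatFunc k) := IntermediateField.adjoin k {f} with hKdef
  have hKle : K ≤ IntermediateField.fixedField G := by
    rw [hKdef, IntermediateField.adjoin_le_iff]
    intro x hx; rw [Set.mem_singleton_iff] at hx; subst hx; exact hfF
  have hGle : G ≤ IntermediateField.fixingSubgroup K :=
    (IntermediateField.le_iff_le G K).mp hKle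
  -- finite dimensionality
  have hX : IsIntegral K RatFunc.X := (aux_X_isAlgebraic k f hfb).isIntegral
  have hfd : FiniteDimensional K (RatFunc k) := by
    have h1 : FiniteDimensional K (IntermediateField.adjoin K {(RatFunc.X : RatFunc k)}) :=
      IntermediateField.adjoin.finiteDimensional hX
    have h3 : (⊤ : IntermediateField k (RatFunc k)) ≤
        (IntermediateField.adjoin K {(RatFunc.X : RatFunc k)}).restrictScalars k := by
      rw [← aux_adjoin_X_top k]
      exact IntermediateField.adjoin_le_iff.mpr
        (fun x hx => IntermediateField.subset_adjoin K _ hx)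
    have h2 : IntermediateField.adjoin K {(RatFunc.X : RatFunc k)} = ⊤ := by
      rw [eq_top_iff]
      intro g _
      exact h3 trivial
    rw [h2] at h1
    exact IntermediateField.topEquiv.toLinearEquiv.finiteDimensional
  -- injective map into a finite group
  have : Finite (RatFunc k ≃ₐ[K] RatFunc k) := Finite.of_fintype _
  have hinj : Function.Injective (fun σ : G =>
      (IntermediateField.fixingSubgroupEquiv K) ⟨σ.1, hGle σ.2⟩) := by
    intro σ τ hστ
    have h1 := (IntermediateField.fixingSubgroupEquiv K).injective hστ
    have h2 : (σ : RatFunc k ≃ₐ[k] RatFunc k) = τ := by injection h1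
    exact Subtype.ext h2
  exact absurd (Finite.of_injective _ hinj) (Infinite.not_finite)
end

section
/- Let k be a field and a ∈ kˣ an element of infinite order in kˣ. Let σ and σ_a be the k-algebra automorphisms of k(x) with σ(x)=1/x and σ_a(x)=a/x. Then the intersection of the fixed fields of ⟨σ⟩ and ⟨σ_a⟩ consists only of constants: k(x)^⟨σ⟩ ∩ k(x)^⟨σ_a⟩ = k, while each fixed field has index 2 in k(x). -/
open Polynomial

private theorem ratfunc_algHom_ext' {k : Type*} [Field k] (f g : RatFunc k →ₐ[k] RatFunc k)
    (h : f RatFunc.X = g RatFunc.X) : f = g := by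
  have h2 : (f.toRingHom).comp (algebraMap (Polynomial k) (RatFunc k))
      = (g.toRingHom).comp (algebraMap (Polynomial k) (RatFunc k)) := by
    have := Polynomial.algHom_ext (R := k)
      (f := f.comp (IsScalarTower.toAlgHom k (Polynomial k) (RatFunc k)))
      (g := g.comp (IsScalarTower.toAlgHom k (Polynomial k) (RatFunc k))) (by
        simpa [RatFunc.algebraMap_X] using h)
    exact congrArg AlgHom.toRingHom this
  have := IsLocalization.ringHom_ext (nonZeroDivisors (Polynomial k)) h2
  exact AlgHom.coe_ringHom_injective this

private theorem ratfunc_algEquiv_ext' {k : Type*} [Field k] (f g : RatFunc k ≃ₐ[k] RatFunc k)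
    (h : f RatFunc.X = g RatFunc.X) : f = g := by
  have := ratfunc_algHom_ext' (f : RatFunc k →ₐ[k] RatFunc k) g h
  ext x
  exact congrArg (fun φ => φ x) this

private theorem coeff_aeval_CaX' {k : Type*} [Field k] (a : k) (p : k[X]) (i : ℕ) :
    (Polynomial.aeval (C a * X) p).coeff i = a ^ i * p.coeff i := by
  induction p using Polynomial.induction_on' with
  | add p q hp hq => simp [map_add, coeff_add, hp, hq, mul_add]
  | monomial n c =>
    simp only [aeval_monomial, algebraMap_eq, mul_pow, ← C_pow, coeff_monomial]
    rw [show C c * (C (a ^ n) * X ^ n) = C (c * a ^ n) * X ^ n by rw [C_mul]; ring]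
    simp only [coeff_C_mul, coeff_X_pow]
    rcases eq_or_ne n i with h | h
    · simp [h, mul_comm]
    · simp only [coeff_C_mul, coeff_X_pow, if_neg h]
      rw [if_neg (fun hh : i = n => h hh.symm)]; ring

private theorem units_pow_inj' {k : Type*} [Field k] {a : kˣ} (ha : ∀ n : ℕ, 0 < n → a ^ n ≠ 1)
    {i j : ℕ} (h : (a : k) ^ i = (a : k) ^ j) : i = j := by
  have h' : a ^ i = a ^ j := Units.ext (by push_cast; exact h)
  have key : ∀ {i j : ℕ}, i < j → a ^ i = a ^ j → False := by
    intro i j hij hh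
    refine ha (j - i) (by omega) ?_
    refine mul_right_cancel (b := a ^ i) ?_
    rw [← pow_add, Nat.sub_add_cancel hij.le, one_mul, hh]
  rcases Nat.lt_trichotomy i j with hij | hij | hij
  · exact absurd h' (fun hh => key hij hh)
  · exact hij
  · exact absurd h'.symm (fun hh => key hij hh)

private theorem fixed_mem_bot' {k : Type*} [Field k] (a : kˣ)
    (ha : ∀ n : ℕ, 0 < n → a ^ n ≠ 1)
    (τ : RatFunc k ≃ₐ[k] RatFunc k)
    (hτ : τ RatFunc.X = algebraMap k (RatFunc k) (a : k) * RatFunc.X)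
    (f : RatFunc k) (hf : τ f = f) :
    f ∈ (⊥ : IntermediateField k (RatFunc k)) := by
  set φ : k[X] →ₐ[k] k[X] := Polynomial.aeval (C (a : k) * X) with hφdef
  have hcomm : ∀ p : k[X],
      τ (algebraMap k[X] (RatFunc k) p) = algebraMap k[X] (RatFunc k) (φ p) := by
    intro p
    have hext : (τ.toAlgHom.comp (IsScalarTower.toAlgHom k k[X] (RatFunc k))) =
        (IsScalarTower.toAlgHom k k[X] (RatFunc k)).comp φ := by
      apply Polynomial.algHom_ext
      simp [hφdef, hτ, RatFunc.algebraMap_X, RatFunc.algebraMap_C, RatFunc.algebraMap_eq_C]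
    exact DFunLike.congr_fun hext p
  by_cases hf0 : f = 0
  · rw [hf0]; exact zero_mem ⊥
  set N := f.num with hN
  set D := f.denom with hD
  have hD0 : D ≠ 0 := RatFunc.denom_ne_zero f
  have hN0 : N ≠ 0 := RatFunc.num_ne_zero hf0
  have hfe : algebraMap k[X] (RatFunc k) N / algebraMap k[X] (RatFunc k) D = f :=
    RatFunc.num_div_denom f
  have hcoef : ∀ (p : k[X]) (i : ℕ), (φ p).coeff i = (a : k) ^ i * p.coeff i :=
    fun p i => coeff_aeval_CaX' _ _ _
  have hφ0 : ∀ p : k[X], φ p = 0 → p = 0 := by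
    intro p hp
    ext i
    have h1 := congrArg (fun q => Polynomial.coeff q i) hp
    simp only [hcoef, coeff_zero] at h1
    rcases mul_eq_zero.mp h1 with h | h
    · exact absurd h (pow_ne_zero _ a.ne_zero)
    · simpa using h
  have hφD0 : φ D ≠ 0 := fun h => hD0 (hφ0 _ h)
  have hφN0 : φ N ≠ 0 := fun h => hN0 (hφ0 _ h)
  have hdd : algebraMap k[X] (RatFunc k) (φ N) / algebraMap k[X] (RatFunc k) (φ D) =
      algebraMap k[X] (RatFunc k) N / algebraMap k[X] (RatFunc k) D := by
    rw [hfe, ← hf]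
    conv_rhs => rw [← hfe]
    rw [map_div₀, hcomm, hcomm]
  rw [div_eq_div_iff (RatFunc.algebraMap_ne_zero hφD0) (RatFunc.algebraMap_ne_zero hD0)] at hdd
  have key : φ N * D = N * φ D :=
    RatFunc.algebraMap_injective k (by rw [map_mul, map_mul]; exact hdd)
  have hcop : IsCoprime N D := f.isCoprime_num_denom
  have hcopφ : IsCoprime (φ N) (φ D) := hcop.map φ.toRingHom
  have hdvd : φ D ∣ D :=
    hcopφ.symm.dvd_of_dvd_mul_left ⟨N, by rw [key, mul_comm]⟩
  set n := D.natDegree with hn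
  have hmonic : D.Monic := f.monic_denom
  obtain ⟨u, hu⟩ := hdvd
  have hu0 : u ≠ 0 := by rintro rfl; rw [mul_zero] at hu; exact hD0 hu
  have hdegφD : (φ D).natDegree = n := by
    apply le_antisymm
    · rw [Polynomial.natDegree_le_iff_coeff_eq_zero]
      intro i hi
      rw [hcoef, Polynomial.coeff_eq_zero_of_natDegree_lt hi, mul_zero]
    · apply Polynomial.le_natDegree_of_ne_zero
      rw [hcoef, hmonic.coeff_natDegree, mul_one]
      exact pow_ne_zero _ a.ne_zero
  have hdegu : u.natDegree = 0 := by
    have h2 := Polynomial.natDegree_mul hφD0 hu0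
    rw [← hu, hdegφD] at h2
    omega
  obtain ⟨c, hc⟩ := Polynomial.natDegree_eq_zero.mp hdegu
  have hc0 : c ≠ 0 := by rintro rfl; rw [← hc, map_zero] at hu0; exact hu0 rfl
  rw [← hc] at hu
  have hDc : ∀ i, D.coeff i = (a : k) ^ i * D.coeff i * c := by
    intro i
    conv_lhs => rw [hu]
    rw [Polynomial.coeff_mul_C, hcoef]
  have hcn : (a : k) ^ n * c = 1 := by
    have h3 := hDc n
    rw [hmonic.coeff_natDegree] at h3
    linear_combination -h3
  have hNc : ∀ i, N.coeff i = (a : k) ^ i * N.coeff i * c := by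
    intro i
    have h4 : φ N * (φ D * C c) = N * φ D := by rw [← hu]; exact key
    have h5 : φ N * C c = N :=
      mul_right_cancel₀ hφD0 (by rw [← h4]; ring : φ N * C c * φ D = N * φ D)
    conv_lhs => rw [← h5]
    rw [Polynomial.coeff_mul_C, hcoef]
  have main : ∀ (P : k[X]), (∀ i, P.coeff i = (a : k) ^ i * P.coeff i * c) →
      ∀ i, P.coeff i ≠ 0 → i = n := by
    intro P hP i hi
    have h2 : (a : k) ^ i * c = 1 := by
      refine mul_left_cancel₀ hi ?_
      rw [mul_one]
      linear_combination -hP i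
    have h6 : (a : k) ^ i * c = (a : k) ^ n * c := by rw [h2, hcn]
    exact units_pow_inj' ha (mul_right_cancel₀ hc0 h6)
  have hDX : D = X ^ n := by
    ext i
    rcases eq_or_ne i n with rfl | hne
    · rw [Polynomial.coeff_X_pow, if_pos rfl, hmonic.coeff_natDegree]
    · rw [Polynomial.coeff_X_pow, if_neg hne]
      by_contra h
      exact hne (main D hDc i h)
  have hNX : N = C (N.coeff n) * X ^ n := by
    ext i
    rcases eq_or_ne i n with rfl | hne
    · rw [Polynomial.coeff_C_mul, Polynomial.coeff_X_pow, if_pos rfl, mul_one]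
    · rw [Polynomial.coeff_C_mul, Polynomial.coeff_X_pow, if_neg hne, mul_zero]
      by_contra h
      exact hne (main N hNc i h)
  rw [IntermediateField.mem_bot]
  refine ⟨N.coeff n, ?_⟩
  have hX0 : algebraMap k[X] (RatFunc k) (X ^ n) ≠ 0 :=
    RatFunc.algebraMap_ne_zero (pow_ne_zero _ Polynomial.X_ne_zero)
  conv_rhs => rw [← hfe, hNX, hDX]
  rw [map_mul, mul_div_assoc, div_self hX0, mul_one, RatFunc.algebraMap_C,
    RatFunc.algebraMap_eq_C]

private theorem finrank_two' {k : Type*} [Field k] (σ : RatFunc k ≃ₐ[k] RatFunc k)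
    (h2 : σ ^ 2 = 1) (h1 : σ ≠ 1) :
    Module.finrank ↥(IntermediateField.fixedField (Subgroup.zpowers σ)) (RatFunc k) = 2 := by
  have ho : orderOf σ = 2 := orderOf_eq_prime h2 h1
  have hfin : Finite (Subgroup.zpowers σ) :=
    Nat.finite_of_card_ne_zero (by rw [Nat.card_zpowers, ho]; norm_num)
  haveI := Fintype.ofFinite ↥(Subgroup.zpowers σ)
  have e : Module.finrank ↥(IntermediateField.fixedField (Subgroup.zpowers σ)) (RatFunc k)
      = Fintype.card ↥(Subgroup.zpowers σ) :=
    FixedPoints.finrank_eq_card (Subgroup.zpowers σ) (RatFunc k)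
  rw [e, ← Nat.card_eq_fintype_card, Nat.card_zpowers, ho]

/-- Let `k` be a field and `a ∈ kˣ` an element of infinite order in `kˣ`. Let `σ` and `σ_a`
be the `k`-algebra automorphisms of `k(x)` with `σ(x) = 1/x` and `σ_a(x) = a/x`. Then the
intersection of the fixed fields of `⟨σ⟩` and `⟨σ_a⟩` consists only of constants:
`k(x)^⟨σ⟩ ∩ k(x)^⟨σ_a⟩ = k`, while each fixed field has index 2 in `k(x)`. -/
theorem statement6 (k : Type*) [Field k] (a : kˣ)
    (ha : ∀ n : ℕ, 0 < n → a ^ n ≠ 1)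
    (σ σa : RatFunc k ≃ₐ[k] RatFunc k)
    (hσ : σ RatFunc.X = (RatFunc.X)⁻¹)
    (hσa : σa RatFunc.X = algebraMap k (RatFunc k) (a : k) / RatFunc.X) :
    IntermediateField.fixedField (Subgroup.zpowers σ) ⊓
      IntermediateField.fixedField (Subgroup.zpowers σa) = ⊥ ∧
    Module.finrank ↥(IntermediateField.fixedField (Subgroup.zpowers σ)) (RatFunc k) = 2 ∧
    Module.finrank ↥(IntermediateField.fixedField (Subgroup.zpowers σa)) (RatFunc k) = 2 := by
  have hX0 : (RatFunc.X : RatFunc k) ≠ 0 := RatFunc.X_ne_zero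
  have ha0 : algebraMap k (RatFunc k) (a : k) ≠ 0 := by
    simp [a.ne_zero]
  -- X * X is not constant
  have hXX : ∀ p : k[X], p.natDegree = 0 → (RatFunc.X : RatFunc k) * RatFunc.X ≠
      algebraMap k[X] (RatFunc k) p := by
    intro p hp hcontra
    rw [← RatFunc.algebraMap_X, ← map_mul] at hcontra
    have := RatFunc.algebraMap_injective k hcontra
    have hdeg := congrArg Polynomial.natDegree this
    rw [Polynomial.natDegree_mul Polynomial.X_ne_zero Polynomial.X_ne_zero,
      Polynomial.natDegree_X, hp] at hdeg
    omega
  -- σ has order 2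
  have hσ2 : σ ^ 2 = 1 := by
    apply ratfunc_algEquiv_ext'
    rw [pow_two, AlgEquiv.mul_apply, hσ, map_inv₀, hσ, inv_inv, AlgEquiv.one_apply]
  have hσ1 : σ ≠ 1 := by
    intro h
    rw [h, AlgEquiv.one_apply] at hσ
    have hxx : (RatFunc.X : RatFunc k) * RatFunc.X = algebraMap k[X] (RatFunc k) 1 := by
      rw [map_one]
      nth_rewrite 2 [hσ]
      exact mul_inv_cancel₀ hX0
    exact hXX 1 (by simp) hxx
  -- σa has order 2
  have hσa2 : σa ^ 2 = 1 := by
    apply ratfunc_algEquiv_ext'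
    rw [pow_two, AlgEquiv.mul_apply, hσa, map_div₀, AlgEquiv.commutes, hσa,
      AlgEquiv.one_apply, div_div_eq_mul_div, mul_comm, mul_div_assoc, div_self ha0, mul_one]
  have hσa1 : σa ≠ 1 := by
    intro h
    rw [h, AlgEquiv.one_apply] at hσa
    have : (RatFunc.X : RatFunc k) * RatFunc.X = algebraMap k[X] (RatFunc k) (Polynomial.C (a : k)) := by
      rw [RatFunc.algebraMap_C, ← RatFunc.algebraMap_eq_C]
      rw [eq_comm, div_eq_iff hX0] at hσa
      rw [← hσa]
    exact hXX (Polynomial.C (a : k)) (Polynomial.natDegree_C _) this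
  refine ⟨?_, finrank_two' σ hσ2 hσ1, finrank_two' σa hσa2 hσa1⟩
  apply le_antisymm _ bot_le
  intro x hx
  have hx1 : σ x = x := hx.1 ⟨σ, Subgroup.mem_zpowers σ⟩
  have hx2 : σa x = x := hx.2 ⟨σa, Subgroup.mem_zpowers σa⟩
  refine fixed_mem_bot' a ha (σa.trans σ) ?_ x ?_
  · show σ (σa RatFunc.X) = _
    rw [hσa, map_div₀, AlgEquiv.commutes, hσ, div_eq_mul_inv, inv_inv]
  · show σ (σa x) = x
    rw [hx2, hx1]
end

section
/- Let k be a field and a ∈ kˣ an element of infinite order in kˣ. Then the intersection of the intermediate fields k(x + 1/x) and k(x + a/x) of k(x)/k consists only of constants: k(x + 1/x) ∩ k(x + a/x) = k. -/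
/-!
The involution `σ : X ↦ 1/X` fixes `X + 1/X` and `τ : X ↦ a/X` fixes `X + a/X`, so every element
of the intersection is fixed by `στ : X ↦ aX` and by all its powers. If the intersection were
larger than `k`, then `X` would be algebraic over it, and the infinitely many distinct `aⁿX`,
being its images under these powers, would all be roots of one nonzero polynomial.
-/

section FieldExtension

variable {k L : Type*} [Field k] [Field L] [Algebra k L]

theorem Transcendental.algebraMap_div {t : L} (ht : Transcendental k t) {c : k} (hc : c ≠ 0) :
    Transcendental k (algebraMap k L c / t) := by
  intro h
  have ht_inv : t⁻¹ = algebraMap k L c⁻¹ * (algebraMap k L c / t) := by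
    rw [map_inv₀, div_eq_mul_inv, inv_mul_cancel_left₀ (by simpa using hc)]
  exact ht (IsAlgebraic.inv_iff.mp (ht_inv ▸ (isAlgebraic_algebraMap c⁻¹).mul h))

theorem AlgHom.eq_self_of_mem_adjoin {f : L →ₐ[k] L} {s : Set L} (hs : ∀ y ∈ s, f y = y)
    {x : L} (hx : x ∈ IntermediateField.adjoin k s) : f x = x := by
  induction hx using IntermediateField.adjoin_induction with
  | mem y hy => exact hs y hy
  | algebraMap c => exact f.commutes c
  | add _ _ _ _ hx hy => rw [map_add, hx, hy]
  | inv _ _ hx => rw [map_inv₀, hx]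
  | mul _ _ _ _ hx hy => rw [map_mul, hx, hy]

open Polynomial in
theorem AlgHom.aeval_apply_of_forall_mem {E : IntermediateField k L} {f : L →ₐ[k] L}
    (hf : ∀ e ∈ E, f e = e) (x : L) (p : E[X]) : aeval (f x) p = f (aeval x p) := by
  rw [aeval_def, aeval_def, ← AlgHom.coe_toRingHom, hom_eval₂]
  congr 1
  ext e
  exact (hf e e.2).symm

end FieldExtension

namespace RatFunc

variable {k : Type*} [Field k]

theorem exists_algHom_apply_X {t : RatFunc k} (ht : Transcendental k t) :
    ∃ f : RatFunc k →ₐ[k] RatFunc k, f X = t := by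
  refine ⟨IsFractionRing.liftAlgHom (transcendental_iff_injective.mp ht), ?_⟩
  rw [IsFractionRing.liftAlgHom_apply, ← algebraMap_X, IsFractionRing.lift_algebraMap]
  exact Polynomial.aeval_X t

theorem exists_algHom_apply_X_eq_algebraMap_div_X {c : k} (hc : c ≠ 0) :
    ∃ f : RatFunc k →ₐ[k] RatFunc k, f X = algebraMap k (RatFunc k) c / X :=
  exists_algHom_apply_X (transcendental_X.algebraMap_div hc)

theorem apply_X_add_algebraMap_div_X {f : RatFunc k →ₐ[k] RatFunc k} {c : k} (hc : c ≠ 0)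
    (hf : f X = algebraMap k (RatFunc k) c / X) :
    f (X + algebraMap k (RatFunc k) c / X) = X + algebraMap k (RatFunc k) c / X := by
  have : algebraMap k (RatFunc k) c ≠ 0 := by simpa using hc
  rw [map_add, map_div₀, hf, AlgHom.commutes]
  field_simp
  ring

theorem pow_apply_X_of_apply_X {f : RatFunc k →ₐ[k] RatFunc k} {c : k}
    (hf : f X = algebraMap k (RatFunc k) c * X) (n : ℕ) :
    (f ^ n) X = algebraMap k (RatFunc k) (c ^ n) * X := by
  induction n with
  | zero => simp
  | succ n ih =>
    rw [pow_succ, AlgHom.mul_apply, hf, map_mul, AlgHom.commutes, ih, pow_succ, map_mul]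
    ring

theorem IntermediateField.eq_bot_of_forall_mem_eq_self {E : IntermediateField k (RatFunc k)}
    {f : RatFunc k →ₐ[k] RatFunc k} (hfE : ∀ e ∈ E, f e = e)
    (hf : Function.Injective fun n : ℕ => (f ^ n) X) : E = ⊥ := by
  by_contra hE
  obtain ⟨p, hp, hpX⟩ := IntermediateField.isAlgebraic_X hE
  refine (p.rootSet_finite (RatFunc k)).not_infinite
    (Set.infinite_of_injective_forall_mem hf fun n => ?_)
  have hfnE : ∀ e ∈ E, (f ^ n) e = e := fun e he => by
    rw [AlgHom.coe_pow]; exact Function.iterate_fixed (hfE e he) n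
  rw [Polynomial.mem_rootSet_of_injective (algebraMap E (RatFunc k)).injective hp,
    AlgHom.aeval_apply_of_forall_mem hfnE, hpX, map_zero]

end RatFunc

open RatFunc

/-- Let `k` be a field and `a ∈ kˣ` an element of infinite order in `kˣ`. Then the
intersection of the intermediate fields `k(x + 1/x)` and `k(x + a/x)` of `k(x)/k` consists
only of constants: `k(x + 1/x) ∩ k(x + a/x) = k`. -/
theorem statement7 (k : Type*) [Field k] (a : kˣ)
    (ha : ∀ n : ℕ, 0 < n → a ^ n ≠ 1) :
    IntermediateField.adjoin k {RatFunc.X + (RatFunc.X)⁻¹} ⊓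
      IntermediateField.adjoin k
        {RatFunc.X + algebraMap k (RatFunc k) (a : k) / RatFunc.X} = ⊥ := by
  obtain ⟨σ, hσX⟩ := exists_algHom_apply_X_eq_algebraMap_div_X (one_ne_zero (α := k))
  obtain ⟨τ, hτX⟩ := exists_algHom_apply_X_eq_algebraMap_div_X a.ne_zero
  have hσ : σ (X + X⁻¹) = X + X⁻¹ := by
    simpa using apply_X_add_algebraMap_div_X one_ne_zero hσX
  have hτ := apply_X_add_algebraMap_div_X a.ne_zero hτX
  have hστ : (σ.comp τ) X = algebraMap k (RatFunc k) a * X := by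
    rw [AlgHom.comp_apply, hτX, map_div₀, AlgHom.commutes, hσX, map_one, div_div_eq_mul_div,
      div_one]
  have hpow : Function.Injective fun n : ℕ => (a : k) ^ n := by
    have ha' : ¬IsOfFinOrder a := by simpa [isOfFinOrder_iff_pow_eq_one] using ha
    simpa [Function.Injective, Units.ext_iff] using injective_pow_iff_not_isOfFinOrder.mpr ha'
  refine IntermediateField.eq_bot_of_forall_mem_eq_self (f := σ.comp τ) (fun e he => ?_) ?_
  · obtain ⟨heu, hev⟩ := _root_.IntermediateField.mem_inf.mp he
    rw [AlgHom.comp_apply, AlgHom.eq_self_of_mem_adjoin (by simpa using hτ) hev,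
      AlgHom.eq_self_of_mem_adjoin (by simpa using hσ) heu]
  · simp_rw [pow_apply_X_of_apply_X hστ]
    exact (mul_left_injective₀ X_ne_zero).comp ((algebraMap k _).injective.comp hpow)
end

section
/- Let k be a field and let g₁, g₂ be k-algebra automorphisms of k(x), each of finite order, such that the subgroup they generate is infinite. Then k(x)^⟨g₁⟩ ∩ k(x)^⟨g₂⟩ = k, while k(x) is a finite extension of each of the fixed fields k(x)^⟨g₁⟩ and k(x)^⟨g₂⟩. -/
open IntermediateField Polynomial

lemma mem_adjoin_ratfunc_X {k : Type*} [Field k] (F : IntermediateField k (RatFunc k))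
    (x : RatFunc k) : x ∈ IntermediateField.adjoin F {RatFunc.X} := by
  have hp : ∀ p : Polynomial k, algebraMap _ (RatFunc k) p ∈ adjoin F {RatFunc.X} := by
    intro p
    induction p using Polynomial.induction_on' with
    | add p q hp hq => rw [map_add]; exact add_mem hp hq
    | monomial n a =>
      rw [← Polynomial.C_mul_X_pow_eq_monomial, map_mul, map_pow, RatFunc.algebraMap_X,
        RatFunc.algebraMap_C]
      refine mul_mem ?_ (pow_mem (IntermediateField.mem_adjoin_simple_self _ _) n)
      have : RatFunc.C a = algebraMap F (RatFunc k) (algebraMap k F a) := by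
        rw [← IsScalarTower.algebraMap_apply, RatFunc.algebraMap_eq_C]
      rw [this]
      exact (adjoin F {RatFunc.X}).algebraMap_mem _
  rw [← RatFunc.num_div_denom x]
  exact div_mem (hp _) (hp _)

lemma finiteDimensional_of_notMem_bot {k : Type*} [Field k] (f : RatFunc k)
    (hf : f ∉ (⊥ : IntermediateField k (RatFunc k))) :
    FiniteDimensional ↥(IntermediateField.adjoin k ({f} : Set (RatFunc k))) (RatFunc k) := by
  set F := IntermediateField.adjoin k ({f} : Set (RatFunc k)) with hF
  set f' : F := AdjoinSimple.gen k f with hf'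
  set P : Polynomial F := (f.num.map (algebraMap k F)) -
    Polynomial.C f' * (f.denom.map (algebraMap k F)) with hP
  have h2 : (algebraMap F (RatFunc k)) f' = f := IntermediateField.AdjoinSimple.algebraMap_gen k f
  have hq0 : algebraMap k[X] (RatFunc k) f.denom ≠ 0 := by
    simpa using RatFunc.denom_ne_zero f
  have h1 : ∀ p : Polynomial k, Polynomial.aeval (RatFunc.X : RatFunc k)
      (p.map (algebraMap k F)) = algebraMap k[X] (RatFunc k) p := by
    intro p
    rw [Polynomial.aeval_map_algebraMap (R := k) (A := ↥F) (B := RatFunc k)]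
    induction p using Polynomial.induction_on' with
    | add p q hp hq => rw [map_add, map_add, hp, hq]
    | monomial n a =>
      rw [← Polynomial.C_mul_X_pow_eq_monomial, map_mul, map_mul, map_pow, map_pow,
        RatFunc.algebraMap_X, Polynomial.aeval_X, Polynomial.aeval_C, RatFunc.algebraMap_C, RatFunc.algebraMap_eq_C]
  have haev : Polynomial.aeval (RatFunc.X : RatFunc k) P = 0 := by
    rw [hP, map_sub, map_mul, h1, h1, Polynomial.aeval_C, h2, sub_eq_zero,
      ← div_eq_iff hq0]
    exact RatFunc.num_div_denom f
  have hP0 : P ≠ 0 := by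
    intro h
    apply hf
    have hco : ∀ i, algebraMap k F (f.num.coeff i) = f' * algebraMap k F (f.denom.coeff i) := by
      intro i
      have := congrArg (fun Q => Polynomial.coeff Q i) h
      simpa [hP, sub_eq_zero, Polynomial.coeff_map, Polynomial.coeff_C_mul] using this
    set j := f.denom.natDegree with hj'
    have hj : f.denom.coeff j ≠ 0 := Polynomial.leadingCoeff_ne_zero.mpr (RatFunc.denom_ne_zero f)
    have hq' : algebraMap k F (f.denom.coeff j) ≠ 0 := by
      simpa using (algebraMap k ↥F).injective.ne hj
    have hthis : f' = algebraMap k F (f.num.coeff j / f.denom.coeff j) := by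
      rw [map_div₀, eq_div_iff hq']
      exact (hco j).symm
    rw [IntermediateField.mem_bot]
    exact ⟨f.num.coeff j / f.denom.coeff j, by
      rw [IsScalarTower.algebraMap_apply k ↥F (RatFunc k), ← hthis, h2]⟩
  have hint : IsIntegral F (RatFunc.X : RatFunc k) :=
    (show IsAlgebraic F (RatFunc.X : RatFunc k) from ⟨P, hP0, haev⟩).isIntegral
  have hfd : FiniteDimensional F (adjoin F {(RatFunc.X : RatFunc k)}) :=
    IntermediateField.adjoin.finiteDimensional hint
  have htop : adjoin F {(RatFunc.X : RatFunc k)} = ⊤ :=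
    eq_top_iff.2 fun x _ => mem_adjoin_ratfunc_X F x
  rw [htop] at hfd
  exact (IntermediateField.topEquiv (F := ↥F) (E := RatFunc k)).toLinearEquiv.finiteDimensional


set_option maxHeartbeats 2000000 in
/-- Let `k` be a field and let `g₁, g₂` be `k`-algebra automorphisms of `k(x)`, each of finite
order, such that the subgroup they generate is infinite. Then
`k(x)^⟨g₁⟩ ∩ k(x)^⟨g₂⟩ = k`, while `k(x)` is a finite extension of each of the fixed fields
`k(x)^⟨g₁⟩` and `k(x)^⟨g₂⟩`. -/
theorem statement8 (k : Type*) [Field k]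
    (g₁ g₂ : RatFunc k ≃ₐ[k] RatFunc k)
    (h₁ : IsOfFinOrder g₁) (h₂ : IsOfFinOrder g₂)
    (hinf : Infinite ↥(Subgroup.closure ({g₁, g₂} : Set (RatFunc k ≃ₐ[k] RatFunc k)))) :
    IntermediateField.fixedField (Subgroup.zpowers g₁) ⊓
      IntermediateField.fixedField (Subgroup.zpowers g₂) = ⊥ ∧
    FiniteDimensional ↥(IntermediateField.fixedField (Subgroup.zpowers g₁)) (RatFunc k) ∧
    FiniteDimensional ↥(IntermediateField.fixedField (Subgroup.zpowers g₂)) (RatFunc k) := by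
  have fin1 : Finite ↥(Subgroup.zpowers g₁) := h₁.finite_zpowers.to_subtype
  have fin2 : Finite ↥(Subgroup.zpowers g₂) := h₂.finite_zpowers.to_subtype
  have fd1 : FiniteDimensional ↥(fixedField (Subgroup.zpowers g₁)) (RatFunc k) :=
    inferInstanceAs (FiniteDimensional
      ↥(FixedPoints.subfield (Subgroup.zpowers g₁) (RatFunc k)) (RatFunc k))
  have fd2 : FiniteDimensional ↥(fixedField (Subgroup.zpowers g₂)) (RatFunc k) :=
    inferInstanceAs (FiniteDimensional
      ↥(FixedPoints.subfield (Subgroup.zpowers g₂) (RatFunc k)) (RatFunc k))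
  refine ⟨le_antisymm ?_ bot_le, fd1, fd2⟩
  intro f hf
  by_contra hfb
  have hf1 : f ∈ fixedField (Subgroup.zpowers g₁) := hf.1
  have hf2 : f ∈ fixedField (Subgroup.zpowers g₂) := hf.2
  have hle1 : k⟮f⟯ ≤ fixedField (Subgroup.zpowers g₁) :=
    IntermediateField.adjoin_simple_le_iff.mpr hf1
  have hle2 : k⟮f⟯ ≤ fixedField (Subgroup.zpowers g₂) :=
    IntermediateField.adjoin_simple_le_iff.mpr hf2
  have hG : Subgroup.closure ({g₁, g₂} : Set (RatFunc k ≃ₐ[k] RatFunc k)) ≤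
      IntermediateField.fixingSubgroup k⟮f⟯ := by
    rw [Subgroup.closure_le]
    rintro g (rfl | rfl)
    · have h := (IntermediateField.le_iff_le (K := k⟮f⟯) (H := Subgroup.zpowers g)).mp hle1
      exact h (Subgroup.mem_zpowers g)
    · have h := (IntermediateField.le_iff_le (K := k⟮f⟯) (H := Subgroup.zpowers g)).mp hle2
      exact h (Subgroup.mem_zpowers g)
  have hfd : FiniteDimensional ↥(k⟮f⟯) (RatFunc k) := finiteDimensional_of_notMem_bot f hfb
  have hfin : Finite (RatFunc k ≃ₐ[↥(k⟮f⟯)] RatFunc k) := Finite.of_fintype _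
  have hfin2 : Finite ↥(IntermediateField.fixingSubgroup k⟮f⟯) :=
    Finite.of_injective _ (IntermediateField.fixingSubgroupEquiv k⟮f⟯).injective
  have : Finite ↥(Subgroup.closure ({g₁, g₂} : Set (RatFunc k ≃ₐ[k] RatFunc k))) :=
    Finite.of_injective (Subgroup.inclusion hG) (Subgroup.inclusion_injective hG)
  exact absurd this (by rw [← not_infinite_iff_finite] at this ⊢; exact fun h => h hinf)
end

section
/- Every element of finite order in SL₂(ℤ₂), where ℤ₂ is the ring of 2-adic integers, has order 1, 2, 3, 4 or 6. -/
open Matrix Finset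

private abbrev Mat := Matrix (Fin 2) (Fin 2) ℤ_[2]

private lemma exists_N (M : Mat) (q : ℕ) :
    ∃ N : Mat, (1 + M) ^ q = 1 + (q : ℤ_[2]) • M + M ^ 2 * N := by
  induction q with
  | zero => exact ⟨0, by simp⟩
  | succ n ih =>
    obtain ⟨N, hN⟩ := ih
    refine ⟨(n : ℤ_[2]) • 1 + N + N * M, ?_⟩
    rw [pow_succ, hN]
    push_cast
    simp only [mul_add, add_mul, one_mul, mul_one, smul_mul_assoc, mul_smul_comm,
      add_smul, one_smul, pow_two, mul_assoc]
    abel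

private lemma core (M : Mat) (hM : ∀ i j, ‖M i j‖ ≤ 4⁻¹)
    (q : ℕ) (hq : q.Prime) (h : (1 + M) ^ q = 1) : M = 0 := by
  obtain ⟨N, hN⟩ := exists_N M q
  rw [h] at hN
  rw [add_assoc, left_eq_add] at hN
  obtain ⟨⟨i, j⟩, -, hmax⟩ := Finset.exists_max_image (Finset.univ : Finset (Fin 2 × Fin 2))
    (fun p => ‖M p.1 p.2‖) ⟨(0, 0), Finset.mem_univ _⟩
  have hb : ∀ a b, ‖M a b‖ ≤ ‖M i j‖ := fun a b => hmax (a, b) (Finset.mem_univ _)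
  set r := ‖M i j‖ with hr
  have hr0 : 0 ≤ r := norm_nonneg _
  have hentry : (q : ℤ_[2]) * M i j = -((M ^ 2 * N) i j) := by
    have := congrFun (congrFun hN i) j
    simp only [Matrix.add_apply, Matrix.smul_apply, Matrix.zero_apply, smul_eq_mul] at this
    exact eq_neg_of_add_eq_zero_left this
  -- bound on each product term
  have key : ∀ (a b c d : Fin 2) (x : ℤ_[2]), ‖M a b * M c d * x‖ ≤ 4⁻¹ * r := by
    intro a b c d x
    calc ‖M a b * M c d * x‖ ≤ ‖M a b * M c d‖ * ‖x‖ := norm_mul_le _ _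
      _ ≤ ‖M a b * M c d‖ * 1 := by
          exact mul_le_mul_of_nonneg_left (PadicInt.norm_le_one x) (norm_nonneg _)
      _ = ‖M a b‖ * ‖M c d‖ := by rw [mul_one, norm_mul]
      _ ≤ 4⁻¹ * r := mul_le_mul (hM a b) (hb c d) (norm_nonneg _) (by norm_num)
  have hrhs : ‖(M ^ 2 * N) i j‖ ≤ 4⁻¹ * r := by
    have : (M ^ 2 * N) i j =
        (M i 0 * M 0 0 + M i 1 * M 1 0) * N 0 j + (M i 0 * M 0 1 + M i 1 * M 1 1) * N 1 j := by
      simp [pow_two, Matrix.mul_apply, Fin.sum_univ_two, add_mul]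
    rw [this]
    simp only [add_mul]
    refine le_trans (PadicInt.nonarchimedean _ _) (max_le (le_trans (PadicInt.nonarchimedean _ _)
      (max_le (key _ _ _ _ _) (key _ _ _ _ _))) (le_trans (PadicInt.nonarchimedean _ _)
      (max_le (key _ _ _ _ _) (key _ _ _ _ _))))
  have hqn : 2⁻¹ ≤ ‖(q : ℤ_[2])‖ := by
    rcases hq.eq_two_or_odd' with rfl | hodd
    · have h2 := PadicInt.norm_p (p := 2)
      norm_num at h2 ⊢
      rw [h2]
    · have h1 : ¬ ‖((q : ℤ) : ℤ_[2])‖ < 1 := by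
        rw [PadicInt.norm_int_lt_one_iff_dvd]
        intro hdvd
        have : (2 : ℕ) ∣ q := by exact_mod_cast hdvd
        exact (Nat.not_even_iff_odd.mpr hodd) ((even_iff_two_dvd).mpr this)
      push_cast at h1
      have h2 := PadicInt.norm_le_one (q : ℤ_[2])
      linarith [lt_or_ge (‖(q : ℤ_[2])‖) 1]
  have hlhs : 2⁻¹ * r ≤ ‖(q : ℤ_[2]) * M i j‖ := by
    rw [norm_mul]
    exact mul_le_mul_of_nonneg_right hqn hr0
  rw [hentry, norm_neg] at hlhs
  have : r ≤ 0 := by linarith [le_trans hlhs hrhs]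
  have hre : r = 0 := le_antisymm this hr0
  ext a b
  simpa using norm_le_zero_iff.mp (hre ▸ hb a b)
private instance : DecidableEq (Matrix.SpecialLinearGroup (Fin 2) (ZMod (2^2))) :=
  fun a b => decidable_of_iff _ Subtype.ext_iff.symm
private instance : Fintype (Matrix.SpecialLinearGroup (Fin 2) (ZMod (2^2))) :=
  Subtype.fintype _
set_option maxRecDepth 100000 in
private lemma foursix : ∀ h : Matrix.SpecialLinearGroup (Fin 2) (ZMod (2^2)), h ^ 4 = 1 ∨ h ^ 6 = 1 := by
  decide

private lemma ker_tf (g : Matrix.SpecialLinearGroup (Fin 2) ℤ_[2]) (hfin : IsOfFinOrder g)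
    (hmap : Matrix.SpecialLinearGroup.map (PadicInt.toZModPow 2) g = 1) : g = 1 := by
  by_contra hne
  have hpos : 0 < orderOf g := hfin.orderOf_pos
  have hne1 : orderOf g ≠ 1 := fun e => hne (orderOf_eq_one_iff.mp e)
  obtain ⟨q, hq, hdvd⟩ := Nat.exists_prime_and_dvd hne1
  set h := g ^ (orderOf g / q) with hh
  have hhq : h ^ q = 1 := by
    rw [hh, ← pow_mul, Nat.div_mul_cancel hdvd, pow_orderOf_eq_one]
  have hdivpos : 0 < orderOf g / q := Nat.div_pos (Nat.le_of_dvd hpos hdvd) hq.pos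
  have hdivlt : orderOf g / q < orderOf g := Nat.div_lt_self hpos hq.one_lt
  have hhne : h ≠ 1 := by
    intro e
    have := orderOf_dvd_of_pow_eq_one (hh ▸ e : g ^ (orderOf g / q) = 1)
    have := Nat.le_of_dvd hdivpos this
    omega
  have hm : Matrix.SpecialLinearGroup.map (PadicInt.toZModPow 2) h = 1 := by
    rw [hh, map_pow, hmap, one_pow]
  -- entries of h - 1 are divisible by 4
  have hmat : ((h : Mat)).map (PadicInt.toZModPow 2) = 1 := congrArg Subtype.val hm
  have hM : ∀ i j, ‖((h : Mat) - 1) i j‖ ≤ 4⁻¹ := by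
    intro i j
    have hz : (PadicInt.toZModPow 2) (((h : Mat) - 1) i j) = 0 := by
      have h1 : (PadicInt.toZModPow 2) ((h : Mat) i j) = (1 : Matrix (Fin 2) (Fin 2) (ZMod (2^2))) i j := by
        rw [← hmat]; simp [Matrix.map_apply]
      simp only [Matrix.sub_apply]
      rw [map_sub, h1]
      rcases eq_or_ne i j with rfl | hij
      · simp [Matrix.one_apply]
      · simp [Matrix.one_apply, hij]
    have hker : ((h : Mat) - 1) i j ∈ Ideal.span {((2:ℕ) : ℤ_[2]) ^ 2} := by
      rw [← PadicInt.ker_toZModPow]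
      exact hz
    have hle := (PadicInt.norm_le_pow_iff_mem_span_pow (((h : Mat) - 1) i j) 2).mpr hker
    calc ‖((h : Mat) - 1) i j‖ ≤ ((2:ℕ):ℝ) ^ (-(2:ℕ) : ℤ) := hle
      _ = 4⁻¹ := by norm_num
  have hz : (h : Mat) - 1 = 0 := by
    apply core _ hM q hq
    have : ((1 : Mat) + ((h : Mat) - 1)) = (h : Mat) := by abel
    rw [this, ← Matrix.SpecialLinearGroup.coe_pow, hhq, Matrix.SpecialLinearGroup.coe_one]
  exact hhne (Subtype.ext (by rw [sub_eq_zero] at hz; exact hz))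

/-- Every element of finite order in `SL₂(ℤ₂)`, where `ℤ₂` is the ring of 2-adic integers,
has order 1, 2, 3, 4 or 6. -/
theorem statement13 (g : Matrix.SpecialLinearGroup (Fin 2) ℤ_[2])
    (hg : IsOfFinOrder g) :
    orderOf g ∈ ({1, 2, 3, 4, 6} : Set ℕ) := by
  have hfs := foursix (Matrix.SpecialLinearGroup.map (PadicInt.toZModPow 2) g)
  have key : ∀ m : ℕ, (Matrix.SpecialLinearGroup.map (PadicInt.toZModPow 2) g) ^ m = 1 →
      orderOf g ∣ m := by
    intro m hm
    apply orderOf_dvd_of_pow_eq_one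
    exact ker_tf (g ^ m) hg.pow (by rw [map_pow, hm])
  simp only [Set.mem_insert_iff, Set.mem_singleton_iff]
  obtain ⟨n, hn⟩ : ∃ n, orderOf g = n := ⟨_, rfl⟩
  rw [hn]
  rcases hfs with h4 | h6
  · have hd := key 4 h4
    rw [hn] at hd
    have hle := Nat.le_of_dvd (by norm_num) hd
    interval_cases n <;> revert hd <;> decide
  · have hd := key 6 h6
    rw [hn] at hd
    have hle := Nat.le_of_dvd (by norm_num) hd
    interval_cases n <;> revert hd <;> decide
end
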